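/- Let T̃ : ℝ² → ℝ be continuously differentiable with compact support, let φ : ℝ² → ℝ be twice continuously differentiable with bounded gradient ∇φ, and fix k, l ∈ ℝ². For z ∈ ℂ define the real-valued perturbation φ_z(x) = z e^{i x·l} + conj(z) e^{−i x·l}, and define G : ℂ → ℂ by G(z) = (2π)⁻¹ ∫_{ℝ²} e^{−i k·x} T̃(x − ∇φ(x) − ∇φ_z(x)) dx. Define A^q(x) = (∂T̃/∂x_q)(x − ∇φ(x)) for q = 1, 2. Then the conjugate Wirtinger-type derivative (∂/∂(re z) − i ∂/∂(im z)) G evaluated at z = 0 equals −2 Σ_{q=1,2} i l_q Â^q(k−l), where Â^q is the Fourier transform of A^q. -/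

import Mathlib

open MeasureTheory
open scoped RealInnerProductSpace

noncomputable section

/-- `ℝ²` as a Euclidean (inner product) space. -/
abbrev E2 := EuclideanSpace ℝ (Fin 2)

/-- The Fourier transform with the paper's normalization:
`f̂(l) = (2π)⁻¹ ∫ e^{-i x·l} f(x) dx`. -/
noncomputable def ft (f : E2 → ℂ) (l : E2) : ℂ :=
  (2 * Real.pi)⁻¹ • ∫ x : E2, Complex.exp (-(Complex.I * (⟪x, l⟫ : ℂ))) * f x

/-- Fourier transform of a real-valued function. -/
noncomputable def ftR (f : E2 → ℝ) (l : E2) : ℂ := ft (fun x => (f x : ℂ)) l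

/-- The `q`-th partial derivative of `f : ℝ² → ℝ`. -/
noncomputable def pderiv2 (q : Fin 2) (f : E2 → ℝ) (x : E2) : ℝ :=
  fderiv ℝ f x (EuclideanSpace.single q 1)

/-- The anti-lensed gradient field `A^q(x) = (∂T/∂x_q)(x - ∇φ(x))`. -/
noncomputable def Aq (T φ : E2 → ℝ) (q : Fin 2) (x : E2) : ℝ :=
  pderiv2 q T (x - gradient φ x)

/-- The real-valued perturbation `φ_z(x) = z e^{i x·l} + conj(z) e^{-i x·l}`. -/
noncomputable def pert (l : E2) (z : ℂ) (x : E2) : ℝ :=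
  (z * Complex.exp (Complex.I * (⟪x, l⟫ : ℂ)) +
    (starRingEnd ℂ) z * Complex.exp (-(Complex.I * (⟪x, l⟫ : ℂ)))).re

/-- The perturbed anti-lensed Fourier coefficient
`G(z) = (2π)⁻¹ ∫ e^{-i k·x} T̃(x - ∇φ(x) - ∇φ_z(x)) dx`. -/
noncomputable def Gfun (T φ : E2 → ℝ) (k l : E2) (z : ℂ) : ℂ :=
  (2 * Real.pi)⁻¹ • ∫ x : E2,
    Complex.exp (-(Complex.I * (⟪x, k⟫ : ℂ))) *
      ((T (x - gradient φ x - gradient (pert l z) x) : ℝ) : ℂ)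


/-! Along the real and imaginary axes, `∇φ_z = -2 (re z · sin(x·l) + im z · cos(x·l)) l`, so
`G(t)` and `G(it)` are Fourier coefficients of `T̃` evaluated at `x - ∇φ(x) + t w(x)` with
`w = 2 sin(x·l) l` resp. `w = 2 cos(x·l) l`. Because `∇φ` and `w` are bounded, every integrand is
supported in one fixed compact set, so we may differentiate under the integral sign and get
`∫ e^{-ik·x} ∂_{w(x)} T̃(x - ∇φ(x)) dx`. In the combination `∂_re - i ∂_im` the trigonometric
factors collapse, `2 sin θ - 2i cos θ = -2i e^{iθ}`, which shifts the frequency `k` to `k - l`;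
expanding `∂_l T̃ = Σ_q l_q ∂_q T̃` gives the Fourier transforms of the `A^q`. -/

open Metric Set
open scoped Pointwise

section DisplacedSupport

variable {E F : Type*} [NormedAddCommGroup E] [NormedAddCommGroup F]

lemma sub_notMem_of_notMem_add_closedBall {K : Set E} {r : ℝ} {x y : E}
    (hx : x ∉ K + closedBall 0 r) (hy : ‖y‖ ≤ r) : x - y ∉ K :=
  fun h => hx ⟨x - y, h, y, mem_closedBall_zero_iff.2 hy, sub_add_cancel x y⟩

lemma HasCompactSupport.comp_sub_bounded [ProperSpace E] {f : E → F} (hf : HasCompactSupport f)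
    {ψ : E → E} {M : ℝ} (hψ : ∀ x, ‖ψ x‖ ≤ M) :
    HasCompactSupport fun x => f (x - ψ x) :=
  HasCompactSupport.intro (hf.isCompact.add (isCompact_closedBall 0 M)) fun x hx =>
    image_eq_zero_of_notMem_tsupport (sub_notMem_of_notMem_add_closedBall hx (hψ x))

end DisplacedSupport

lemma norm_two_mul_smul_le {F : Type*} [NormedAddCommGroup F] [NormedSpace ℝ F] {θ : ℝ}
    (hθ : |θ| ≤ 1) (v : F) : ‖(2 * θ) • v‖ ≤ 2 * ‖v‖ := by
  rw [norm_smul, Real.norm_eq_abs, abs_mul, abs_two]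
  gcongr
  linarith

lemma clm_apply_eq_sum_single {ι : Type*} [Fintype ι] [DecidableEq ι]
    (L : EuclideanSpace ℝ ι →L[ℝ] ℝ) (v : EuclideanSpace ℝ ι) :
    L v = ∑ i, v i * L (EuclideanSpace.single i 1) := by
  conv_lhs => rw [← (EuclideanSpace.basisFun ι ℝ).sum_repr v]
  simp [map_sum]

section Gradient

variable {F : Type*} [NormedAddCommGroup F] [InnerProductSpace ℝ F] [CompleteSpace F]

lemma HasDerivAt.hasGradientAt_comp_inner {h : ℝ → ℝ} {h' : ℝ} {l x : F}
    (hh : HasDerivAt h h' ⟪x, l⟫) : HasGradientAt (fun y => h ⟪y, l⟫) (h' • l) x := by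
  have hinner : HasFDerivAt (fun y => ⟪y, l⟫) (InnerProductSpace.toDual ℝ F l) x := by
    convert (InnerProductSpace.toDual ℝ F l).hasFDerivAt using 1
    ext y
    simp [real_inner_comm]
  rw [hasGradientAt_iff_hasFDerivAt, map_smul]
  exact hh.comp_hasFDerivAt x hinner

lemma ContDiff.continuous_gradient {f : F → ℝ} {n : WithTop ℕ∞} (hf : ContDiff ℝ n f)
    (hn : n ≠ 0) : Continuous (gradient f) :=
  (InnerProductSpace.toDual ℝ F).symm.continuous.comp (hf.continuous_fderiv hn)

end Gradient

section ParametricIntegral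

variable {E : Type*} [NormedAddCommGroup E] [NormedSpace ℝ E]
  {T : E → ℝ} {ψ w : E → E} {M W : ℝ}

lemma fderiv_sub_add_smul_eq_zero (hψM : ∀ x, ‖ψ x‖ ≤ M) (hwW : ∀ x, ‖w x‖ ≤ W) {x : E}
    (hx : x ∉ tsupport T + closedBall 0 (M + W)) {t : ℝ} (ht : |t| ≤ 1) :
    fderiv ℝ T (x - ψ x + t • w x) = 0 := by
  have hdisp : ‖ψ x - t • w x‖ ≤ M + W := by
    grw [norm_sub_le, norm_smul, Real.norm_eq_abs, ht, one_mul, hψM x, hwW x]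
  rw [show x - ψ x + t • w x = x - (ψ x - t • w x) by abel]
  exact fderiv_of_notMem_tsupport ℝ (sub_notMem_of_notMem_add_closedBall hx hdisp)

variable [FiniteDimensional ℝ E] [MeasurableSpace E] [BorelSpace E]
  {μ : Measure E} [IsFiniteMeasureOnCompacts μ] {e : E → ℂ}

lemma hasDerivAt_integral_mul_comp_add_smul (hT : ContDiff ℝ 1 T) (hTc : HasCompactSupport T)
    (hψ : Continuous ψ) (hψM : ∀ x, ‖ψ x‖ ≤ M) (hw : Continuous w) (hwW : ∀ x, ‖w x‖ ≤ W)
    (he : Continuous e) :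
    Integrable (fun x => e x * (fderiv ℝ T (x - ψ x) (w x) : ℂ)) μ ∧
      HasDerivAt (fun t : ℝ => ∫ x, e x * (T (x - ψ x + t • w x) : ℂ) ∂μ)
        (∫ x, e x * (fderiv ℝ T (x - ψ x) (w x) : ℂ) ∂μ) 0 := by
  set K := tsupport T + closedBall (0 : E) (M + W)
  have hK : IsCompact K := hTc.isCompact.add (isCompact_closedBall 0 _)
  obtain ⟨B, hB⟩ := hK.exists_bound_of_continuousOn he.continuousOn
  obtain ⟨C, hC⟩ := (hTc.fderiv (𝕜 := ℝ)).exists_bound_of_continuous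
    (hT.continuous_fderiv one_ne_zero)
  have hint₀ : Integrable (fun x => e x * (T (x - ψ x) : ℂ)) μ :=
    (he.mul (by fun_prop)).integrable_of_hasCompactSupport
      ((hTc.comp_sub_bounded hψM).comp_left Complex.ofReal_zero).mul_left
  have hbound : ∀ x, ∀ t ∈ ball (0 : ℝ) 1,
      ‖e x * (fderiv ℝ T (x - ψ x + t • w x) (w x) : ℂ)‖
        ≤ K.indicator (fun _ => B * (C * W)) x := by
    intro x t ht
    have ht : |t| ≤ 1 := by simpa using (mem_ball_zero_iff.1 ht).le
    by_cases hx : x ∈ K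
    · rw [indicator_of_mem hx, norm_mul, Complex.norm_real]
      exact mul_le_mul (hB x hx) ((ContinuousLinearMap.le_opNorm _ _).trans
        (mul_le_mul (hC _) (hwW x) (norm_nonneg _) ((norm_nonneg _).trans (hC 0))))
        (norm_nonneg _) ((norm_nonneg _).trans (hB x hx))
    · simp [indicator_of_notMem hx, fderiv_sub_add_smul_eq_zero hψM hwW hx ht]
  have hderiv : ∀ x, ∀ t : ℝ, HasDerivAt (fun t : ℝ => e x * (T (x - ψ x + t • w x) : ℂ))
      (e x * (fderiv ℝ T (x - ψ x + t • w x) (w x) : ℂ)) t := by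
    intro x t
    have hline : HasDerivAt (fun t : ℝ => x - ψ x + t • w x) (w x) t := by
      simpa using ((hasDerivAt_id t).smul_const (w x)).const_add (x - ψ x)
    exact (((hT.differentiable one_ne_zero _).hasFDerivAt.comp_hasDerivAt t hline).ofReal_comp
      ).const_mul (e x)
  simpa using hasDerivAt_integral_of_dominated_loc_of_deriv_le (μ := μ) (x₀ := 0)
    (F := fun t x => e x * (T (x - ψ x + t • w x) : ℂ))
    (F' := fun t x => e x * (fderiv ℝ T (x - ψ x + t • w x) (w x) : ℂ))
    (ball_mem_nhds 0 one_pos)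
    (Filter.Eventually.of_forall fun t => (he.mul (by fun_prop)).aestronglyMeasurable)
    (by simpa using hint₀)
    ((he.mul (by fun_prop)).aestronglyMeasurable)
    (ae_of_all _ hbound)
    ((integrable_indicator_iff hK.measurableSet).2 (integrableOn_const hK.measure_lt_top.ne))
    (ae_of_all _ fun x t _ => hderiv x t)

end ParametricIntegral

lemma pert_eq (l : E2) (z : ℂ) (x : E2) :
    pert l z x = 2 * (z.re * Real.cos ⟪x, l⟫ - z.im * Real.sin ⟪x, l⟫) := by
  simp only [pert, Complex.add_re, Complex.mul_re, Complex.conj_re, Complex.conj_im,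
    mul_comm Complex.I, ← neg_mul, ← Complex.ofReal_neg, Complex.exp_ofReal_mul_I_re,
    Complex.exp_ofReal_mul_I_im, Real.cos_neg, Real.sin_neg]
  ring

lemma gradient_pert (l : E2) (z : ℂ) (x : E2) :
    gradient (pert l z) x = -((2 * (z.re * Real.sin ⟪x, l⟫ + z.im * Real.cos ⟪x, l⟫)) • l) := by
  have hθ : HasDerivAt (fun θ => 2 * (z.re * Real.cos θ - z.im * Real.sin θ))
      (-(2 * (z.re * Real.sin ⟪x, l⟫ + z.im * Real.cos ⟪x, l⟫))) ⟪x, l⟫ := by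
    refine ((((Real.hasDerivAt_cos _).const_mul z.re).sub
      ((Real.hasDerivAt_sin _).const_mul z.im)).const_mul 2).congr_deriv ?_
    ring
  rw [funext (pert_eq l z), hθ.hasGradientAt_comp_inner.gradient, neg_smul]

lemma Gfun_ofReal (T φ : E2 → ℝ) (k l : E2) (t : ℝ) :
    Gfun T φ k l t = (2 * Real.pi)⁻¹ • ∫ x : E2, Complex.exp (-(Complex.I * (⟪x, k⟫ : ℂ))) *
      ((T (x - gradient φ x + t • (2 * Real.sin ⟪x, l⟫) • l) : ℝ) : ℂ) := by
  simp [Gfun, gradient_pert, smul_smul, mul_left_comm]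

lemma Gfun_ofReal_mul_I (T φ : E2 → ℝ) (k l : E2) (t : ℝ) :
    Gfun T φ k l (t * Complex.I) = (2 * Real.pi)⁻¹ • ∫ x : E2,
      Complex.exp (-(Complex.I * (⟪x, k⟫ : ℂ))) *
        ((T (x - gradient φ x + t • (2 * Real.cos ⟪x, l⟫) • l) : ℝ) : ℂ) := by
  simp [Gfun, gradient_pert, smul_smul, mul_left_comm]

lemma exp_mul_sin_sub_I_mul_exp_mul_cos (x k l : E2) (B : ℝ) :
    Complex.exp (-(Complex.I * (⟪x, k⟫ : ℂ))) * ((2 * Real.sin ⟪x, l⟫ * B : ℝ) : ℂ) -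
        Complex.I *
          (Complex.exp (-(Complex.I * (⟪x, k⟫ : ℂ))) * ((2 * Real.cos ⟪x, l⟫ * B : ℝ) : ℂ))
      = -2 * Complex.I * (Complex.exp (-(Complex.I * (⟪x, k - l⟫ : ℂ))) * B) := by
  have hexp : Complex.exp (-(Complex.I * (⟪x, k - l⟫ : ℂ)))
      = Complex.exp (-(Complex.I * (⟪x, k⟫ : ℂ))) * Complex.exp (⟪x, l⟫ * Complex.I) := by
    rw [← Complex.exp_add, inner_sub_right]
    push_cast
    ring_nf
  rw [hexp, Complex.exp_mul_I]
  push_cast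
  linear_combination (2 * Complex.exp (-(Complex.I * (⟪x, k⟫ : ℂ))) * Complex.sin ⟪x, l⟫ * B) *
    Complex.I_sq

lemma sum_mul_ftR_Aq {T φ : E2 → ℝ} (hT : ContDiff ℝ 1 T) (hTc : HasCompactSupport T)
    (hφ : Continuous (gradient φ)) {Mφ : ℝ} (hbφ : ∀ x, ‖gradient φ x‖ ≤ Mφ) (k l : E2) :
    ∑ q : Fin 2, (l q : ℂ) * ftR (Aq T φ q) k
      = ft (fun x => (fderiv ℝ T (x - gradient φ x) l : ℂ)) k := by
  have hint : ∀ q : Fin 2, Integrable fun x : E2 =>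
      Complex.exp (-(Complex.I * (⟪x, k⟫ : ℂ))) * (Aq T φ q x : ℂ) := fun q =>
    have hsupp : HasCompactSupport fun y => fderiv ℝ T y (EuclideanSpace.single q 1) :=
      (hTc.fderiv (𝕜 := ℝ)).comp_left
        (g := fun L : E2 →L[ℝ] ℝ => L (EuclideanSpace.single q 1)) rfl
    (Continuous.integrable_of_hasCompactSupport (by unfold Aq pderiv2; fun_prop)
      ((hsupp.comp_sub_bounded hbφ).comp_left Complex.ofReal_zero).mul_left)
  simp only [ftR, ft, mul_smul_comm, ← Finset.smul_sum, ← integral_const_mul]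
  rw [← integral_finsetSum _ fun q _ => (hint q).const_mul _]
  congr 2 with x
  rw [clm_apply_eq_sum_single _ l]
  push_cast [Aq, pderiv2, Finset.mul_sum]
  exact Finset.sum_congr rfl fun q _ => by ring

lemma integrable_and_hasDerivAt_lensedShift {T φ : E2 → ℝ} (hT : ContDiff ℝ 1 T)
    (hTc : HasCompactSupport T) (hφ : Continuous (gradient φ)) {Mφ : ℝ}
    (hbφ : ∀ x, ‖gradient φ x‖ ≤ Mφ) (k l : E2) {s : ℝ → ℝ} (hs : Continuous s)
    (hs₁ : ∀ θ, |s θ| ≤ 1) :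
    Integrable (fun x : E2 => Complex.exp (-(Complex.I * (⟪x, k⟫ : ℂ))) *
        ((2 * s ⟪x, l⟫ * fderiv ℝ T (x - gradient φ x) l : ℝ) : ℂ)) ∧
      HasDerivAt (fun t : ℝ => (2 * Real.pi)⁻¹ • ∫ x : E2,
          Complex.exp (-(Complex.I * (⟪x, k⟫ : ℂ))) *
            ((T (x - gradient φ x + t • (2 * s ⟪x, l⟫) • l) : ℝ) : ℂ))
        ((2 * Real.pi)⁻¹ • ∫ x : E2, Complex.exp (-(Complex.I * (⟪x, k⟫ : ℂ))) *
          ((2 * s ⟪x, l⟫ * fderiv ℝ T (x - gradient φ x) l : ℝ) : ℂ)) 0 := by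
  obtain ⟨hint, hderiv⟩ := hasDerivAt_integral_mul_comp_add_smul (μ := volume) hT hTc hφ hbφ
    (w := fun x => (2 * s ⟪x, l⟫) • l) (by fun_prop) (fun x => norm_two_mul_smul_le (hs₁ _) l)
    (e := fun x => Complex.exp (-(Complex.I * (⟪x, k⟫ : ℂ)))) (by fun_prop)
  simp only [map_smul, smul_eq_mul] at hint hderiv
  exact ⟨hint, hderiv.const_smul ((2 * Real.pi)⁻¹ : ℝ)⟩

lemma integral_sin_sub_I_mul_integral_cos {T φ : E2 → ℝ} (hT : ContDiff ℝ 1 T)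
    (hTc : HasCompactSupport T) (hφ : Continuous (gradient φ)) {Mφ : ℝ}
    (hbφ : ∀ x, ‖gradient φ x‖ ≤ Mφ) (k l : E2) :
    (∫ x : E2, Complex.exp (-(Complex.I * (⟪x, k⟫ : ℂ))) *
        ((2 * Real.sin ⟪x, l⟫ * fderiv ℝ T (x - gradient φ x) l : ℝ) : ℂ)) -
      Complex.I * ∫ x : E2, Complex.exp (-(Complex.I * (⟪x, k⟫ : ℂ))) *
        ((2 * Real.cos ⟪x, l⟫ * fderiv ℝ T (x - gradient φ x) l : ℝ) : ℂ)
      = -2 * Complex.I * ∫ x : E2, Complex.exp (-(Complex.I * (⟪x, k - l⟫ : ℂ))) *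
        (fderiv ℝ T (x - gradient φ x) l : ℂ) := by
  have hsin := (integrable_and_hasDerivAt_lensedShift hT hTc hφ hbφ k l
    Real.continuous_sin Real.abs_sin_le_one).1
  have hcos := (integrable_and_hasDerivAt_lensedShift hT hTc hφ hbφ k l
    Real.continuous_cos Real.abs_cos_le_one).1
  rw [← integral_const_mul, ← integral_sub hsin (hcos.const_mul _), ← integral_const_mul]
  simp only [exp_mul_sin_sub_I_mul_exp_mul_cos]

/-- Lemma "partialconj", second equation: the conjugate Wirtinger-type derivative
`(∂/∂(re z) - i ∂/∂(im z)) G` at `z = 0` equals `-2 ∑_q i l_q Â^q(k-l)`. -/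
theorem stmt8 (T : E2 → ℝ) (hT : ContDiff ℝ 1 T) (hTc : HasCompactSupport T)
    (φ : E2 → ℝ) (hφ : ContDiff ℝ 2 φ)
    (Mφ : ℝ) (hbφ : ∀ x, ‖gradient φ x‖ ≤ Mφ)
    (k l : E2) :
    deriv (fun t : ℝ => Gfun T φ k l (t : ℂ)) 0 -
        Complex.I * deriv (fun t : ℝ => Gfun T φ k l ((t : ℂ) * Complex.I)) 0
      = -2 * ∑ q : Fin 2, Complex.I * ((l q : ℝ) : ℂ) * ftR (Aq T φ q) (k - l) := by
  have hψ := hφ.continuous_gradient two_ne_zero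
  have h_re := (integrable_and_hasDerivAt_lensedShift hT hTc hψ hbφ k l
    Real.continuous_sin Real.abs_sin_le_one).2
  have h_im := (integrable_and_hasDerivAt_lensedShift hT hTc hψ hbφ k l
    Real.continuous_cos Real.abs_cos_le_one).2
  simp_rw [Gfun_ofReal, Gfun_ofReal_mul_I, h_re.deriv, h_im.deriv, mul_assoc Complex.I,
    ← Finset.mul_sum, sum_mul_ftR_Aq hT hTc hψ hbφ, ft, Complex.real_smul]
  linear_combination ((2 * Real.pi)⁻¹ : ℝ) * integral_sin_sub_I_mul_integral_cos hT hTc hψ hbφ k l
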